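/- For every fixed r ≥ 2 there exists n₀ such that for all n ≥ n₀ one has N_2(Sym_n(T), r) > N_1(Sym_n(T), r) in the transposition Cayley graph Sym_n(T). -/

import Mathlib

open Finset Equiv
open scoped Classical

/-- The transposition Cayley graph `Sym_n(T)` on the symmetric group of `{1,…,n}`:
vertices are the permutations of `Fin n`, with `x` and `y` adjacent
iff `x⁻¹ * y` is a transposition. -/
def symT (n : ℕ) : SimpleGraph (Equiv.Perm (Fin n)) where
  Adj x y := (x⁻¹ * y).IsSwap
  symm := by
    constructor
    intro x y h
    have hxy : y⁻¹ * x = (x⁻¹ * y)⁻¹ := by group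
    obtain ⟨a, b, hab, hswap⟩ := h
    exact ⟨a, b, hab, by rw [hxy, hswap, Equiv.swap_inv]⟩
  loopless := by
    constructor
    intro x h
    obtain ⟨a, b, hab, hswap⟩ := h
    rw [inv_mul_cancel] at hswap
    have : b = a := by simpa using congrArg (fun f => f.toFun a) hswap.symm
    exact hab this.symm

/-- The ball of radius `r` around `x` in the graph `G`. -/
noncomputable def gBall {V : Type*} [Fintype V] (G : SimpleGraph V) (x : V) (r : ℕ) : Finset V :=
  Finset.univ.filter fun y => G.dist x y ≤ r

/-- The sphere of radius `r` around `x` in the graph `G`. -/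
noncomputable def gSphere {V : Type*} [Fintype V] (G : SimpleGraph V) (x : V) (r : ℕ) : Finset V :=
  Finset.univ.filter fun y => G.dist x y = r

/-- `N(Γ,r)`: the maximum of `|B_r(x) ∩ B_r(y)|` over pairs of distinct vertices. -/
noncomputable def gN {V : Type*} [Fintype V] (G : SimpleGraph V) (r : ℕ) : ℕ :=
  (Finset.univ.filter fun p : V × V => p.1 ≠ p.2).sup
    fun p => (gBall G p.1 r ∩ gBall G p.2 r).card

/-- `N_s(Γ,r)`: the maximum of `|B_r(x) ∩ B_r(y)|` over pairs at distance `s`. -/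
noncomputable def gNs {V : Type*} [Fintype V] (G : SimpleGraph V) (s r : ℕ) : ℕ :=
  (Finset.univ.filter fun p : V × V => G.dist p.1 p.2 = s).sup
    fun p => (gBall G p.1 r ∩ gBall G p.2 r).card


/-!
`Sym_n(T)` is bipartite, the two sides being the even and the odd permutations, so no vertex is
equidistant from the two ends of an edge. Hence for adjacent `x, y` the `r`-balls meet inside
`B_{r-1}(x) ∪ B_{r-1}(y)`, and `N_1 ≤ 2 |B_{r-1}|`.

A permutation at distance `≤ r - 1` from `1` moves at most `2r - 2` points. Fix a point `a` and
let `W` be the part of `B_{r-1}(1)` fixing `a`. The rest of the ball consists of permutations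
moving `a` with support of size `≤ 2r - 2`, at most `C(n-1, 2r-3) (2r-2)! = O(n^{2r-3})` of them,
while products of `r - 1` disjoint transpositions avoiding `a` show `|W| ≥ C(n-1, 2r-2)`, of order
`n^{2r-2}`. So `2 |B_{r-1}| < 3 |W|` for large `n`.

The 3-cycle `g = (a b)(b c)` is at distance `2` from `1`, and the three transpositions of
`{a, b, c}` are common neighbours of `1` and `g`. For each such `s` the translate `s W` lies in
`B_r(1) ∩ B_r(g)`, and the three translates are disjoint because `s` is recovered from
`(s w)(a) = s(a)`. Hence `N_2 ≥ 3 |W|`.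
-/

open scoped Nat

lemma two_mul_choose_pred_mul_factorial_lt_choose {N m : ℕ} (hm : 1 ≤ m)
    (h : 2 * m ! * m < N + 1 - m) : 2 * (N.choose (m - 1) * m !) < N.choose m := by
  obtain ⟨j, rfl⟩ : ∃ j, m = j + 1 := ⟨m - 1, by omega⟩
  rw [Nat.add_sub_cancel]
  have hpos : 0 < N.choose j := Nat.choose_pos (by omega)
  refine Nat.lt_of_mul_lt_mul_right (a := j + 1) ?_
  rw [Nat.choose_succ_right_eq]
  calc 2 * (N.choose j * (j + 1)!) * (j + 1) = N.choose j * (2 * (j + 1)! * (j + 1)) := by ring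
    _ < N.choose j * (N - j) := Nat.mul_lt_mul_of_pos_left (by omega) hpos

section Balls

variable {V : Type*} [Fintype V] (G : SimpleGraph V)

lemma mem_gBall {x z : V} {r : ℕ} : z ∈ gBall G x r ↔ G.dist x z ≤ r := by
  simp [gBall]

lemma card_le_gNs {s r : ℕ} {x y : V} (hxy : G.dist x y = s) {L : Finset V}
    (hL : L ⊆ gBall G x r ∩ gBall G y r) : #L ≤ gNs G s r := by
  have hmem : (x, y) ∈ univ.filter fun p : V × V => G.dist p.1 p.2 = s := by simp [hxy]
  refine le_trans ?_ (le_sup hmem)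
  exact card_le_card hL

lemma gNs_one_succ_le (hpar : ∀ x y z, G.Adj x y → G.dist x z ≠ G.dist y z) {k b : ℕ}
    (hb : ∀ x, #(gBall G x k) ≤ b) : gNs G 1 (k + 1) ≤ 2 * b := by
  refine Finset.sup_le fun p hp => ?_
  have hadj : G.Adj p.1 p.2 := SimpleGraph.dist_eq_one_iff_adj.mp (by simpa using hp)
  have hsub : gBall G p.1 (k + 1) ∩ gBall G p.2 (k + 1) ⊆ gBall G p.1 k ∪ gBall G p.2 k := by
    intro z hz
    simp only [mem_inter, mem_union, mem_gBall] at hz ⊢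
    have := hpar _ _ z hadj
    omega
  calc #(gBall G p.1 (k + 1) ∩ gBall G p.2 (k + 1)) ≤ #(gBall G p.1 k ∪ gBall G p.2 k) :=
        card_le_card hsub
    _ ≤ #(gBall G p.1 k) + #(gBall G p.2 k) := card_union_le _ _
    _ ≤ 2 * b := by linarith [hb p.1, hb p.2]

end Balls

section Counting

variable {α : Type*} [Fintype α] [DecidableEq α]

lemma card_filter_support_subset_le (s : Finset α) :
    #{z : Perm α | z.support ⊆ s} ≤ (#s)! := by
  calc #{z : Perm α | z.support ⊆ s}
      ≤ #((univ : Finset (Perm {x // x ∈ s})).image (Perm.ofSubtype (p := (· ∈ s)))) := by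
        refine card_le_card fun z hz => ?_
        obtain ⟨w, rfl⟩ := (Perm.mem_range_ofSubtype_iff (p := (· ∈ s))).mpr
          fun x hx => (mem_filter.mp hz).2 hx
        exact mem_image_of_mem _ (mem_univ w)
    _ ≤ (#s)! := card_image_le.trans (by simp [Fintype.card_perm])

lemma card_filter_apply_ne_le (a : α) {m : ℕ} (hm : 1 ≤ m) (hmα : m ≤ Fintype.card α) :
    #{z : Perm α | z a ≠ a ∧ #z.support ≤ m} ≤
      (Fintype.card α - 1).choose (m - 1) * m ! := by
  have hcover : ({z : Perm α | z a ≠ a ∧ #z.support ≤ m} : Finset _) ⊆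
      (powersetCard (m - 1) (univ.erase a)).biUnion
        fun u => {z : Perm α | z.support ⊆ insert a u} := by
    intro z hz
    simp only [mem_filter, mem_univ, true_and] at hz
    have ha : a ∈ z.support := Perm.mem_support.mpr hz.1
    obtain ⟨u, hzu, hu, hcard⟩ :=
      exists_subsuperset_card_eq (n := m - 1) (erase_subset_erase a (subset_univ z.support))
        (by rw [card_erase_of_mem ha]; omega)
        (by rw [card_erase_of_mem (mem_univ a), card_univ]; omega)
    simp only [mem_biUnion, mem_powersetCard, mem_filter, mem_univ, true_and]
    exact ⟨u, ⟨hu, hcard⟩, (insert_erase ha).symm.subset.trans (insert_subset_insert a hzu)⟩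
  calc _ ≤ _ := card_le_card hcover
    _ ≤ ∑ u ∈ powersetCard (m - 1) (univ.erase a),
          #{z : Perm α | z.support ⊆ insert a u} := card_biUnion_le
    _ ≤ ∑ u ∈ powersetCard (m - 1) (univ.erase a), m ! := by
        refine sum_le_sum fun u hu => (card_filter_support_subset_le _).trans ?_
        refine Nat.factorial_le ((card_insert_le a u).trans ?_)
        rw [(mem_powersetCard.mp hu).2]
        omega
    _ = (Fintype.card α - 1).choose (m - 1) * m ! := by
        simp [card_erase_of_mem]

lemma card_image_mul_of_injOn_apply {a : α} {S W : Finset (Perm α)}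
    (hS : Set.InjOn (fun s : Perm α => s a) S) (hW : ∀ w ∈ W, w a = a) :
    #((S ×ˢ W).image fun p => p.1 * p.2) = #S * #W := by
  rw [card_image_of_injOn, card_product]
  rintro ⟨s, w⟩ hsw ⟨s', w'⟩ hsw' h
  simp only [coe_product, Set.mem_prod, mem_coe] at hsw hsw' h
  have hs : s = s' := hS hsw.1 hsw'.1 (by simpa [hW w hsw.2, hW w' hsw'.2] using congr($h a))
  subst hs
  simpa using h

end Counting

section Transpositions

variable {n : ℕ}

lemma symT_adj_iff {x y : Perm (Fin n)} : (symT n).Adj x y ↔ (x⁻¹ * y).IsSwap := Iff.rfl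

lemma symT_adj_mul_left (g : Perm (Fin n)) {x y : Perm (Fin n)} (h : (symT n).Adj x y) :
    (symT n).Adj (g * x) (g * y) := by
  rwa [symT_adj_iff, mul_inv_rev, mul_assoc, inv_mul_cancel_left]

lemma symT_connected (n : ℕ) : (symT n).Connected := by
  suffices h : ∀ z, (symT n).Reachable 1 z from
    (SimpleGraph.connected_iff _).mpr ⟨fun x y => (h x).symm.trans (h y), ⟨1⟩⟩
  intro z
  induction z using Perm.swap_induction_on' with
  | one => rfl
  | mul_swap f a b hab ih =>
    exact ih.trans (SimpleGraph.Adj.reachable (by simpa [symT_adj_iff] using ⟨a, b, hab, rfl⟩))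

lemma symT_dist_mul_left (g x y : Perm (Fin n)) :
    (symT n).dist (g * x) (g * y) = (symT n).dist x y := by
  have hle : ∀ g x y : Perm (Fin n), (symT n).dist (g * x) (g * y) ≤ (symT n).dist x y := by
    intro g x y
    obtain ⟨p, hp⟩ := (symT_connected n).exists_walk_length_eq_dist x y
    let f : symT n →g symT n := ⟨(g * ·), symT_adj_mul_left g⟩
    exact (SimpleGraph.dist_le (p.map f)).trans (by simp [hp])
  refine (hle g x y).antisymm ?_
  simpa using hle g⁻¹ (g * x) (g * y)

lemma card_gBall_symT (x : Perm (Fin n)) (k : ℕ) :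
    #(gBall (symT n) x k) = #(gBall (symT n) 1 k) := by
  refine card_nbij' (x⁻¹ * ·) (x * ·) (fun z hz => ?_) (fun z hz => ?_)
    (fun z _ => by simp) (fun z _ => by simp)
  · simpa [mem_gBall, ← symT_dist_mul_left x⁻¹ x z] using hz
  · simpa [mem_gBall, ← symT_dist_mul_left x 1 z] using hz

lemma symT_dist_mul_le_of_adj {x s : Perm (Fin n)} (hs : (symT n).Adj x s) (w : Perm (Fin n)) :
    (symT n).dist x (s * w) ≤ (symT n).dist 1 w + 1 := by
  calc (symT n).dist x (s * w) ≤ (symT n).dist x s + (symT n).dist s (s * w) :=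
        (symT_connected n).dist_triangle
    _ = (symT n).dist 1 w + 1 := by
        rw [SimpleGraph.dist_eq_one_iff_adj.mpr hs, ← symT_dist_mul_left s 1 w, mul_one, add_comm]

lemma sign_inv_mul_eq_neg_one_pow_length {x z : Perm (Fin n)} (p : (symT n).Walk x z) :
    Perm.sign (x⁻¹ * z) = (-1) ^ p.length := by
  induction p with
  | nil => simp
  | @cons u v w h p ih =>
    rw [SimpleGraph.Walk.length_cons, pow_succ', ← ih, ← h.sign_eq, ← map_mul,
      mul_assoc, mul_inv_cancel_left]

lemma card_support_inv_mul_le_two_mul_length {x z : Perm (Fin n)} (p : (symT n).Walk x z) :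
    #(x⁻¹ * z).support ≤ 2 * p.length := by
  induction p with
  | nil => simp
  | @cons u v w h p ih =>
    have hsplit : u⁻¹ * w = (u⁻¹ * v) * (v⁻¹ * w) := by group
    calc #(u⁻¹ * w).support ≤ #((u⁻¹ * v).support ∪ (v⁻¹ * w).support) :=
          card_le_card (hsplit ▸ Perm.support_mul_le _ _)
      _ ≤ #(u⁻¹ * v).support + #(v⁻¹ * w).support := card_union_le _ _
      _ ≤ 2 * (p.cons h).length := by
          rw [Perm.card_support_eq_two.mpr h, SimpleGraph.Walk.length_cons]
          omega

lemma card_support_le_two_mul_symT_dist (z : Perm (Fin n)) :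
    #z.support ≤ 2 * (symT n).dist 1 z := by
  obtain ⟨p, hp⟩ := (symT_connected n).exists_walk_length_eq_dist 1 z
  simpa [hp] using card_support_inv_mul_le_two_mul_length p

lemma symT_dist_ne_of_adj {x y : Perm (Fin n)} (h : (symT n).Adj x y) (z : Perm (Fin n)) :
    (symT n).dist x z ≠ (symT n).dist y z := by
  intro heq
  obtain ⟨p, hp⟩ := (symT_connected n).exists_walk_length_eq_dist x z
  obtain ⟨q, hq⟩ := (symT_connected n).exists_walk_length_eq_dist y z
  have hx := sign_inv_mul_eq_neg_one_pow_length p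
  have hsplit : x⁻¹ * z = (x⁻¹ * y) * (y⁻¹ * z) := by group
  rw [hsplit, map_mul, h.sign_eq, sign_inv_mul_eq_neg_one_pow_length q, hp, hq, heq,
    neg_one_mul] at hx
  exact units_ne_neg_self _ hx.symm

lemma exists_support_eq_symT_dist_le (k : ℕ) {u : Finset (Fin n)} (hu : #u = 2 * k) :
    ∃ z : Perm (Fin n), z.support = u ∧ (symT n).dist 1 z ≤ k := by
  induction k generalizing u with
  | zero => exact ⟨1, by simpa [eq_comm] using hu, by simp⟩
  | succ k ih =>
    obtain ⟨x, hx⟩ := card_pos.mp (show 0 < #u by omega)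
    obtain ⟨y, hy⟩ := card_pos.mp (show 0 < #(u.erase x) by rw [card_erase_of_mem hx]; omega)
    obtain ⟨w, hw, hdist⟩ := ih (u := (u.erase x).erase y)
      (by rw [card_erase_of_mem hy, card_erase_of_mem hx]; omega)
    have hyx : y ≠ x := ne_of_mem_erase hy
    have hdisj : (swap x y).Disjoint w := by
      rw [Perm.disjoint_iff_disjoint_support, Perm.support_swap hyx.symm, hw]
      simp [disjoint_left]
    refine ⟨swap x y * w, ?_, ?_⟩
    · rw [hdisj.support_mul, Perm.support_swap hyx.symm, hw, insert_union, singleton_union,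
        insert_erase hy, insert_erase hx]
    · have := symT_dist_mul_le_of_adj (x := 1) (s := swap x y)
        (by simpa [symT_adj_iff] using ⟨x, y, hyx.symm, rfl⟩) w
      omega

lemma choose_le_card_filter_apply_eq (a : Fin n) (k : ℕ) :
    (n - 1).choose (2 * k) ≤ #{z ∈ gBall (symT n) 1 k | z a = a} := by
  have hsurj : Set.SurjOn Perm.support
      (({z ∈ gBall (symT n) 1 k | z a = a} : Finset _) : Set _)
      (powersetCard (2 * k) (univ.erase a) : Set (Finset (Fin n))) := by
    intro u hu
    obtain ⟨hua, hu⟩ := mem_powersetCard.mp hu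
    obtain ⟨z, rfl, hz⟩ := exists_support_eq_symT_dist_le k hu
    refine ⟨z, ?_, rfl⟩
    simpa [mem_gBall, hz] using fun h => notMem_erase a univ (hua (Perm.mem_support.mpr h))
  simpa using card_le_card_of_surjOn _ hsurj

lemma card_gBall_one_le (a : Fin n) {k : ℕ} (hk : 1 ≤ k) (hkn : 2 * k ≤ n) :
    #(gBall (symT n) 1 k) ≤
      #{z ∈ gBall (symT n) 1 k | z a = a} + (n - 1).choose (2 * k - 1) * (2 * k)! := by
  rw [← card_filter_add_card_filter_not (fun z => z a = a)]
  gcongr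
  have hcount := card_filter_apply_ne_le a (m := 2 * k) (by omega) (by simpa using hkn)
  rw [Fintype.card_fin] at hcount
  refine (card_le_card fun z hz => ?_).trans hcount
  simp only [mem_filter, mem_gBall] at hz
  have := card_support_le_two_mul_symT_dist z
  simp only [mem_filter, mem_univ, true_and]
  omega

lemma three_mul_card_le_gNs_two {a b c : Fin n} (hab : a ≠ b) (hbc : b ≠ c) (hac : a ≠ c)
    (k : ℕ) : 3 * #{z ∈ gBall (symT n) 1 k | z a = a} ≤ gNs (symT n) 2 (k + 1) := by
  set g := swap a b * swap b c
  set S : Finset (Perm (Fin n)) := {swap a b, swap b c, swap a c}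
  have hcommon : ∀ s ∈ S, (symT n).Adj 1 s ∧ (symT n).Adj g s := by
    have hg : g⁻¹ * swap a b = swap b c ∧ g⁻¹ * swap b c = swap c a ∧
        g⁻¹ * swap a c = swap a b := by
      refine ⟨?_, ?_, ?_⟩ <;> ext i <;>
        simp only [g, mul_inv_rev, swap_inv, Perm.mul_apply, swap_apply_def] <;> split_ifs <;>
        simp_all
    simp only [S, mem_insert, mem_singleton, symT_adj_iff, inv_one, one_mul]
    rintro s (rfl | rfl | rfl)
    · exact ⟨⟨a, b, hab, rfl⟩, ⟨b, c, hbc, hg.1⟩⟩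
    · exact ⟨⟨b, c, hbc, rfl⟩, ⟨c, a, hac.symm, hg.2.1⟩⟩
    · exact ⟨⟨a, c, hac, rfl⟩, ⟨a, b, hab, hg.2.2⟩⟩
  have hinj : Set.InjOn (fun s : Perm (Fin n) => s a) S := by
    simp only [S, coe_insert, coe_singleton, Set.InjOn, Set.mem_insert_iff, Set.mem_singleton_iff]
    rintro s (rfl | rfl | rfl) t (rfl | rfl | rfl) h <;> simp_all [swap_apply_of_ne_of_ne]
  have hS : #S = 3 := by
    rw [← card_image_of_injOn hinj]
    simp [S, swap_apply_of_ne_of_ne hab hac, hac, hbc, hab.symm]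
  have hdist : (symT n).dist 1 g = 2 := by
    have hsign : Perm.sign g = 1 := by simp [g, Perm.sign_swap hab, Perm.sign_swap hbc]
    have hedist : (symT n).edist 1 g = 2 := by
      refine SimpleGraph.edist_eq_two_iff.mpr ⟨fun h => ?_, fun h => ?_, ⟨swap a b, ?_⟩⟩
      · simpa [g, swap_apply_of_ne_of_ne hab hac, hab] using congr($h a)
      · rw [symT_adj_iff, inv_one, one_mul] at h
        rw [h.sign_eq] at hsign
        exact absurd hsign (by decide)
      · exact (SimpleGraph.mem_commonNeighbors _).mpr (hcommon _ (by simp [S]))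
    have := ((symT_connected n).preconnected 1 g).coe_dist_eq_edist
    rw [hedist] at this
    exact_mod_cast this
  rw [← hS, ← card_image_mul_of_injOn_apply hinj fun w hw => (mem_filter.mp hw).2]
  refine card_le_gNs (symT n) hdist fun z hz => ?_
  obtain ⟨⟨s, w⟩, hsw, rfl⟩ := mem_image.mp hz
  simp only [mem_product, mem_filter, mem_gBall] at hsw
  have h1 := symT_dist_mul_le_of_adj (hcommon s hsw.1).1 w
  have h2 := symT_dist_mul_le_of_adj (hcommon s hsw.1).2 w
  simp only [mem_inter, mem_gBall]
  omega

end Transpositions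

/-- Theorem 8(ii) of the paper. For every fixed `r ≥ 2` there exists `n₀`
such that `N_2(Sym_n(T), r) > N_1(Sym_n(T), r)` for all `n ≥ n₀`. -/
theorem statement17 (r : ℕ) (hr : 2 ≤ r) :
    ∃ n₀ : ℕ, ∀ n : ℕ, n₀ ≤ n → gNs (symT n) 1 r < gNs (symT n) 2 r := by
  obtain ⟨k, rfl⟩ : ∃ k, r = k + 1 + 1 := ⟨r - 2, by omega⟩
  refine ⟨2 * (2 * (k + 1))! * (2 * (k + 1)) + 2 * (k + 1) + 1, fun n hn => ?_⟩
  let a : Fin n := ⟨0, by omega⟩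
  let b : Fin n := ⟨1, by omega⟩
  let c : Fin n := ⟨2, by omega⟩
  have hN1 : gNs (symT n) 1 (k + 1 + 1) ≤ 2 * #(gBall (symT n) 1 (k + 1)) :=
    gNs_one_succ_le _ (fun _ _ z h => symT_dist_ne_of_adj h z) fun x => (card_gBall_symT x _).le
  have hball := card_gBall_one_le a (k := k + 1) (by omega) (by omega)
  have hfix := choose_le_card_filter_apply_eq a (k + 1)
  have hgap := two_mul_choose_pred_mul_factorial_lt_choose (N := n - 1) (m := 2 * (k + 1))
    (by omega) (by omega)
  have hN2 := three_mul_card_le_gNs_two (a := a) (b := b) (c := c) (by simp [a, b, Fin.ext_iff])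
    (by simp [b, c, Fin.ext_iff]) (by simp [a, c, Fin.ext_iff]) (k + 1)
  omega
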